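/- Let G, Π_X, Π_Y be profinite groups (compact, Hausdorff, totally disconnected topological groups), and let π_X : Π_X → G and π_Y : Π_Y → G be continuous surjective group homomorphisms with kernels N_X = ker π_X and N_Y = ker π_Y. Assume N_Y is slim, i.e., for every open subgroup H of N_Y the centralizer of H in N_Y is trivial. Let φ̄ : N_X → N_Y be a continuous group homomorphism which is an open map, and assume that for every s ∈ Π_X there exists t ∈ Π_Y with π_Y(t) = π_X(s) such that φ̄(s·x·s⁻¹) = t·φ̄(x)·t⁻¹ for all x ∈ N_X. Then there exists a unique continuous group homomorphism φ : Π_X → Π_Y such that π_Y ∘ φ = π_X and φ(x) = φ̄(x) for all x ∈ N_X. -/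

import Mathlib

/-!
Slimness of `ker πY` together with openness of `φ̄` makes the element `t` of the
compatibility hypothesis unique: two choices differ by an element of `ker πY` centralizing
the open subgroup `φ̄(ker πX)`. Uniqueness turns `s ↦ t` into a homomorphism over `G`
extending `φ̄`, and its graph is cut out by closed conditions in `ΠX × ΠY`; a map into a
compact space with closed graph is continuous.
-/

theorem continuous_of_isClosed_graph {X Y : Type*} [TopologicalSpace X] [TopologicalSpace Y]
    [CompactSpace Y] {f : X → Y} (hf : IsClosed (Function.graph f : Set (X × Y))) :
    Continuous f := by
  refine continuous_iff_isClosed.2 fun C hC => ?_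
  have hpre : f ⁻¹' C = Prod.fst '' (Function.graph f ∩ Prod.snd ⁻¹' C) := by
    ext x
    constructor
    · exact fun hx => ⟨(x, f x), ⟨rfl, hx⟩, rfl⟩
    · rintro ⟨⟨x, y⟩, ⟨rfl : f x = y, hy⟩, rfl⟩
      exact hy
  rw [hpre]
  exact isClosedMap_fst_of_compactSpace _ (hf.inter (hC.preimage continuous_snd))

namespace KernelExtension

variable {G PX PY : Type*} [Group G] [Group PX] [Group PY]
  {piX : PX →* G} {piY : PY →* G} {φbar : piX.ker →* piY.ker}

variable (piX piY φbar) in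
def IsCompatible (s : PX) (t : PY) : Prop :=
  piY t = piX s ∧ ∀ x : piX.ker, (φbar (MulAut.conjNormal s x) : PY) = t * φbar x * t⁻¹

theorem IsCompatible.eq (hcent : Subgroup.centralizer (φbar.range : Set piY.ker) = ⊥)
    {s : PX} {t t' : PY} (ht : IsCompatible piX piY φbar s t)
    (ht' : IsCompatible piX piY φbar s t') : t = t' := by
  have hker : t'⁻¹ * t ∈ piY.ker := by
    rw [MonoidHom.mem_ker, map_mul, map_inv, ht.1, ht'.1, inv_mul_cancel]
  have hmem : (⟨t'⁻¹ * t, hker⟩ : piY.ker) ∈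
      Subgroup.centralizer (φbar.range : Set piY.ker) := by
    rintro _ ⟨x, rfl⟩
    have hconj : t * (φbar x : PY) * t⁻¹ = t' * φbar x * t'⁻¹ := (ht.2 x).symm.trans (ht'.2 x)
    ext
    calc (φbar x : PY) * (t'⁻¹ * t)
        = t'⁻¹ * (t' * φbar x * t'⁻¹) * t := by group
      _ = t'⁻¹ * (t * φbar x * t⁻¹) * t := by rw [hconj]
      _ = t'⁻¹ * t * φbar x := by group
  rw [hcent, Subgroup.mem_bot, Subtype.ext_iff] at hmem
  exact (inv_mul_eq_one.mp hmem).symm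

theorem IsCompatible.mul {s s' : PX} {t t' : PY} (ht : IsCompatible piX piY φbar s t)
    (ht' : IsCompatible piX piY φbar s' t') : IsCompatible piX piY φbar (s * s') (t * t') := by
  refine ⟨by rw [map_mul, map_mul, ht.1, ht'.1], fun x => ?_⟩
  rw [map_mul, MulAut.mul_apply, ht.2, ht'.2]
  group

theorem isCompatible_coe_ker (x : piX.ker) : IsCompatible piX piY φbar x (φbar x) := by
  refine ⟨by rw [MonoidHom.mem_ker.mp (φbar x).2, MonoidHom.mem_ker.mp x.2], fun y => ?_⟩
  have hconj : MulAut.conjNormal (x : PX) y = x * y * x⁻¹ := by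
    ext
    simp [MulAut.conjNormal_apply]
  simp [hconj]

theorem isCompatible_apply {ψ : PX →* PY} (hcomp : piY.comp ψ = piX)
    (hext : ∀ x : piX.ker, ψ x = φbar x) (s : PX) : IsCompatible piX piY φbar s (ψ s) := by
  refine ⟨DFunLike.congr_fun hcomp s, fun x => ?_⟩
  rw [← hext, ← hext, MulAut.conjNormal_apply, map_mul, map_mul, map_inv]

theorem isClosed_setOf_isCompatible [TopologicalSpace G] [T2Space G]
    [TopologicalSpace PX] [IsTopologicalGroup PX] [TopologicalSpace PY] [IsTopologicalGroup PY]
    [T2Space PY] (hpiX : Continuous piX) (hpiY : Continuous piY) (hφ : Continuous φbar) :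
    IsClosed {p : PX × PY | IsCompatible piX piY φbar p.1 p.2} := by
  simp only [IsCompatible, Set.ofPred_and, Set.ofPred_forall]
  refine (isClosed_eq (by fun_prop) (by fun_prop)).inter (isClosed_iInter fun x => ?_)
  have hconj : Continuous fun s : PX => MulAut.conjNormal s x := by
    refine continuous_induced_rng.2 ?_
    simp only [Function.comp_def, MulAut.conjNormal_apply]
    fun_prop
  exact isClosed_eq (continuous_subtype_val.comp (hφ.comp (hconj.comp continuous_fst)))
    (by fun_prop)

variable (hex : ∀ s, ∃ t, IsCompatible piX piY φbar s t)
  (hcent : Subgroup.centralizer (φbar.range : Set piY.ker) = ⊥)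

noncomputable def extend : PX →* PY :=
  MonoidHom.mk' (fun s => (hex s).choose) fun s s' =>
    ((hex (s * s')).choose_spec.eq hcent ((hex s).choose_spec.mul (hex s').choose_spec))

theorem isCompatible_extend (s : PX) : IsCompatible piX piY φbar s (extend hex hcent s) :=
  (hex s).choose_spec

theorem eq_extend_of_isCompatible {s : PX} {t : PY} (ht : IsCompatible piX piY φbar s t) :
    t = extend hex hcent s :=
  ht.eq hcent (isCompatible_extend hex hcent s)

theorem graph_extend :
    Function.graph (extend hex hcent) = {p : PX × PY | IsCompatible piX piY φbar p.1 p.2} := by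
  ext ⟨s, t⟩
  constructor
  · rintro (rfl : extend hex hcent s = t)
    exact isCompatible_extend hex hcent s
  · exact fun ht => (eq_extend_of_isCompatible hex hcent ht).symm

end KernelExtension

open KernelExtension in
theorem extension_of_kernel_map_general {G PX PY : Type*}
    [Group G] [TopologicalSpace G]
    [T2Space G]
    [Group PX] [TopologicalSpace PX] [IsTopologicalGroup PX]
    [Group PY] [TopologicalSpace PY] [IsTopologicalGroup PY]
    [CompactSpace PY] [T2Space PY]
    (piX : PX →* G) (piY : PY →* G)
    (hpiXc : Continuous piX) (hpiYc : Continuous piY)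
    (hslim : ∀ H : Subgroup piY.ker, IsOpen (H : Set piY.ker) →
      ∀ c ∈ Subgroup.centralizer (H : Set piY.ker), c = 1)
    (φbar : piX.ker →* piY.ker) (hφc : Continuous φbar) (hφopen : IsOpenMap φbar)
    (hequiv : ∀ s : PX, ∃ t : PY, piY t = piX s ∧
      ∀ x : piX.ker,
        (φbar ⟨s * (x : PX) * s⁻¹,
            (MonoidHom.normal_ker piX).conj_mem (x : PX) x.2 s⟩ : PY)
          = t * (φbar x : PY) * t⁻¹) :
    ∃! φ : PX →* PY, Continuous φ ∧ piY.comp φ = piX ∧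
      ∀ x : piX.ker, φ (x : PX) = (φbar x : PY) := by
  have hex : ∀ s, ∃ t, IsCompatible piX piY φbar s t := hequiv
  have hcent : Subgroup.centralizer (φbar.range : Set piY.ker) = ⊥ :=
    (Subgroup.eq_bot_iff_forall _).2 <|
      hslim φbar.range (by simpa only [MonoidHom.coe_range] using hφopen.isOpen_range)
  refine ⟨extend hex hcent, ⟨?_, ?_, fun x => ?_⟩, ?_⟩
  · apply continuous_of_isClosed_graph
    rw [graph_extend]
    exact isClosed_setOf_isCompatible hpiXc hpiYc hφc
  · ext s
    exact (isCompatible_extend hex hcent s).1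
  · exact (eq_extend_of_isCompatible hex hcent (isCompatible_coe_ker x)).symm
  · rintro ψ ⟨-, hcomp, hext⟩
    ext s
    exact eq_extend_of_isCompatible hex hcent (isCompatible_apply hcomp hext s)

/-- Surjectivity step (graph construction) in the proof of Proposition 2.5:
given profinite groups over `G` with `ker πY` slim, a continuous open homomorphism
`φ̄ : ker πX →* ker πY` compatible with the conjugation actions extends uniquely to
a continuous homomorphism `φ : PX →* PY` over `G`. -/
theorem extension_of_kernel_map {G PX PY : Type*}
    [Group G] [TopologicalSpace G] [IsTopologicalGroup G]
    [CompactSpace G] [T2Space G] [TotallyDisconnectedSpace G]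
    [Group PX] [TopologicalSpace PX] [IsTopologicalGroup PX]
    [CompactSpace PX] [T2Space PX] [TotallyDisconnectedSpace PX]
    [Group PY] [TopologicalSpace PY] [IsTopologicalGroup PY]
    [CompactSpace PY] [T2Space PY] [TotallyDisconnectedSpace PY]
    (piX : PX →* G) (piY : PY →* G)
    (hpiXc : Continuous piX) (hpiYc : Continuous piY)
    (hsX : Function.Surjective piX) (hsY : Function.Surjective piY)
    (hslim : ∀ H : Subgroup piY.ker, IsOpen (H : Set piY.ker) →
      ∀ c ∈ Subgroup.centralizer (H : Set piY.ker), c = 1)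
    (φbar : piX.ker →* piY.ker) (hφc : Continuous φbar) (hφopen : IsOpenMap φbar)
    (hequiv : ∀ s : PX, ∃ t : PY, piY t = piX s ∧
      ∀ x : piX.ker,
        (φbar ⟨s * (x : PX) * s⁻¹,
            (MonoidHom.normal_ker piX).conj_mem (x : PX) x.2 s⟩ : PY)
          = t * (φbar x : PY) * t⁻¹) :
    ∃! φ : PX →* PY, Continuous φ ∧ piY.comp φ = piX ∧
      ∀ x : piX.ker, φ (x : PX) = (φbar x : PY) :=
  extension_of_kernel_map_general piX piY hpiXc hpiYc hslim φbar hφc hφopen hequiv
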